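/- (Proposition 4.1, converse direction, single-IFS case) Let $g : I \to \mathbb{R}$ be continuous satisfying $g(L_n(x)) = \gamma_n g(x) + q_n(x)$, and let $\hat{g} : I \to \mathbb{R}$ be a continuous function satisfying $\hat{g}(L_n(x)) = \hat{\gamma}_n \hat{g}(x) + \hat{q}_n(x)$ with $\hat{\gamma}_n = a_n \gamma_n$, $\hat{q}_n(x) = \hat{q}_n(x_0) + a_n \int_{x_0}^x q_n(t)\,dt$ with $\hat q_n(x_0) = \hat y_{n-1} - a_n\gamma_n \hat y_0$, and endpoint values $\hat{g}(x_0) = \hat{y}_0$, $\hat{g}(x_N) = \hat{y}_N$ (with $\hat y_n$ as determined by the integral relations). Then $\hat{g}(x) = \hat{y}_0 + \int_{x_0}^x g(t)\,dt$; in particular $\hat{g}$ is differentiable and $\hat{g}'(x) = g(x)$ for all $x \in I$. -/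

import Mathlib

open Set intervalIntegral MeasureTheory

/-! Both `ĝ` and the primitive `G t = ŷ₀ + ∫_{x₀}^t g` solve the same self-referential equation:
for `G` this follows from the change of variables `s = Lₙ u` on `[x_{n-1}, Lₙ t]` and the
functional equation of `g`. Hence `h = ĝ - G` satisfies `h (Lₙ t) = aₙ γₙ h t` with
`|aₙ γₙ| < 1`. Since the images `Lₙ(I) = [x_{n-1}, xₙ]` cover `I`, the maximum of `|h|` on `I`
is at most `|aₙ γₙ|` times itself, so `h = 0`. -/

lemma monotoneOn_Iic_of_lt_succ {β : Type*} [Preorder β] {x : ℕ → β} {N : ℕ}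
    (hx : ∀ i, i < N → x i < x (i + 1)) : MonotoneOn x (Iic N) :=
  monotoneOn_of_le_succ ordConnected_Iic fun i _ _ hi => by
    rw [Order.succ_eq_add_one] at hi ⊢
    exact (hx i (Nat.lt_of_succ_le hi)).le

lemma exists_mem_Icc_pred_of_mem_Icc {β : Type*} [LinearOrder β] {x : ℕ → β} {N : ℕ}
    (hN : 1 ≤ N) {s : β} (hs : s ∈ Icc (x 0) (x N)) :
    ∃ n ∈ Finset.Icc 1 N, s ∈ Icc (x (n - 1)) (x n) := by
  classical
  have hex : ∃ k, 1 ≤ k ∧ s ≤ x k := ⟨N, hN, hs.2⟩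
  obtain ⟨hn₁, hsn⟩ := Nat.find_spec hex
  refine ⟨Nat.find hex, Finset.mem_Icc.2 ⟨hn₁, Nat.find_min' hex ⟨hN, hs.2⟩⟩, ?_, hsn⟩
  rcases hn₁.eq_or_lt with h | h
  · rw [← h]
    exact hs.1
  · have := Nat.find_min hex (Nat.sub_lt (by omega) one_pos)
    exact (not_le.1 fun h' => this ⟨by omega, h'⟩).le

theorem eqOn_zero_of_forall_exists_norm_le_mul {X E : Type*} [TopologicalSpace X]
    [NormedAddCommGroup E] {K : Set X} (hK : IsCompact K) {f : X → E} (hf : ContinuousOn f K)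
    (h : ∀ s ∈ K, ∃ t ∈ K, ∃ c < 1, ‖f s‖ ≤ c * ‖f t‖) : EqOn f 0 K := by
  rcases K.eq_empty_or_nonempty with rfl | hne
  · exact eqOn_empty _ _
  obtain ⟨s₀, hs₀, hmax⟩ := hK.exists_isMaxOn hne hf.norm
  obtain ⟨t, ht, c, hc, hle⟩ := h s₀ hs₀
  have hts : ‖f t‖ ≤ ‖f s₀‖ := hmax ht
  have hft : ‖f t‖ ≤ 0 := by nlinarith
  have hmax_zero : ‖f s₀‖ ≤ 0 := hle.trans (by nlinarith [norm_nonneg (f t)])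
  exact fun s hs => norm_le_zero_iff.1 ((hmax hs).trans hmax_zero)

lemma integral_affine_eq_add {E : Type*} [NormedAddCommGroup E] [NormedSpace ℝ E]
    {g : ℝ → E} {a b c t : ℝ} (ha : a ≠ 0)
    (h₁ : IntervalIntegrable g volume c (a * c + b))
    (h₂ : IntervalIntegrable g volume (a * c + b) (a * t + b)) :
    ∫ s in c..a * t + b, g s = (∫ s in c..a * c + b, g s) + a • ∫ u in c..t, g (a * u + b) := by
  rw [← integral_add_adjacent_intervals h₁ h₂, integral_comp_mul_add g ha b, smul_inv_smul₀ ha]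

lemma integral_affine_of_functional_eq {g q : ℝ → ℝ} {x₀ x₁ a b γ t : ℝ} (ha : a ≠ 0)
    (hg : ContinuousOn g (Icc x₀ x₁)) (hq : ContinuousOn q (Icc x₀ x₁))
    (hfe : ∀ u ∈ Icc x₀ x₁, g (a * u + b) = γ * g u + q u)
    (hL₀ : a * x₀ + b ∈ Icc x₀ x₁) (ht : t ∈ Icc x₀ x₁) (hLt : a * t + b ∈ Icc x₀ x₁) :
    ∫ s in x₀..a * t + b, g s =
      a * γ * (∫ s in x₀..t, g s) + (∫ s in x₀..a * x₀ + b, g s) + a * ∫ s in x₀..t, q s := by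
  have hx₀ : x₀ ∈ Icc x₀ x₁ := left_mem_Icc.2 (ht.1.trans ht.2)
  have hint : ∀ {f : ℝ → ℝ}, ContinuousOn f (Icc x₀ x₁) → ∀ {u v : ℝ}, u ∈ Icc x₀ x₁ →
      v ∈ Icc x₀ x₁ → IntervalIntegrable f volume u v :=
    fun hf _ _ hu hv => (hf.mono (uIcc_subset_Icc hu hv)).intervalIntegrable
  have hcomp : ∫ u in x₀..t, g (a * u + b) = γ * (∫ s in x₀..t, g s) + ∫ s in x₀..t, q s := by
    rw [integral_congr fun u hu => hfe u (uIcc_subset_Icc hx₀ ht hu),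
      integral_add ((hint hg hx₀ ht).const_mul γ) (hint hq hx₀ ht),
      intervalIntegral.integral_const_mul]
  rw [integral_affine_eq_add ha (hint hg hx₀ hL₀) (hint hg hL₀ hLt), smul_eq_mul, hcomp]
  ring

lemma hasDerivWithinAt_integral_of_continuousOn {g : ℝ → ℝ} {c d t : ℝ}
    (hg : ContinuousOn g (Icc c d)) (ht : t ∈ Icc c d) :
    HasDerivWithinAt (fun u => ∫ s in c..u, g s) (g t) (Icc c d) t := by
  have : Fact (t ∈ Icc c d) := ⟨ht⟩
  exact integral_hasDerivWithinAt_right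
    (hg.mono (uIcc_subset_Icc (left_mem_Icc.2 (ht.1.trans ht.2)) ht)).intervalIntegrable
    (hg.stronglyMeasurableAtFilter_nhdsWithin measurableSet_Icc t) (hg t ht)

theorem stmt_15_general (N : ℕ) (hN : 1 ≤ N) (x : ℕ → ℝ)
    (hx : ∀ i, i < N → x i < x (i + 1))
    (a b γ : ℕ → ℝ)
    (ha : ∀ n ∈ Finset.Icc 1 N, 0 < a n ∧ a n < 1)
    (hγ : ∀ n ∈ Finset.Icc 1 N, |γ n| < 1)
    (L : ℕ → ℝ → ℝ) (hL : ∀ n t, L n t = a n * t + b n)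
    (hL0 : ∀ n ∈ Finset.Icc 1 N, L n (x 0) = x (n - 1))
    (hLN : ∀ n ∈ Finset.Icc 1 N, L n (x N) = x n)
    (q : ℕ → ℝ → ℝ)
    (hq : ∀ n ∈ Finset.Icc 1 N, ContinuousOn (q n) (Icc (x 0) (x N)))
    (g : ℝ → ℝ) (hg : ContinuousOn g (Icc (x 0) (x N)))
    (hfe : ∀ n ∈ Finset.Icc 1 N, ∀ t ∈ Icc (x 0) (x N),
      g (L n t) = γ n * g t + q n t)
    (yhat0 : ℝ) (yhat : ℕ → ℝ)
    (hyhat : ∀ j ≤ N, yhat j = yhat0 + ∫ s in (x 0)..(x j), g s)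
    (ghat : ℝ → ℝ) (hghatc : ContinuousOn ghat (Icc (x 0) (x N)))
    (hghatfe : ∀ n ∈ Finset.Icc 1 N, ∀ t ∈ Icc (x 0) (x N),
      ghat (L n t) = (a n * γ n) * ghat t +
        (yhat (n - 1) - a n * γ n * yhat0 + a n * ∫ s in (x 0)..t, q n s)) :
    (∀ t ∈ Icc (x 0) (x N), ghat t = yhat0 + ∫ s in (x 0)..t, g s) ∧
    (∀ t ∈ Icc (x 0) (x N), HasDerivWithinAt ghat (g t) (Icc (x 0) (x N)) t) := by
  obtain rfl : L = fun n t => a n * t + b n := funext₂ hL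
  simp only at hL0 hLN hfe hghatfe
  set I := Icc (x 0) (x N)
  have hxI : ∀ j ≤ N, x j ∈ I := fun j hj =>
    ⟨monotoneOn_Iic_of_lt_succ hx (Nat.zero_le N) hj (Nat.zero_le j),
      monotoneOn_Iic_of_lt_succ hx hj (mem_Iic.2 le_rfl) hj⟩
  have himage : ∀ n ∈ Finset.Icc 1 N, (a n * · + b n) '' I = Icc (x (n - 1)) (x n) :=
    fun n hn => by rw [image_affine_Icc' (ha n hn).1, hL0 n hn, hLN n hn]
  have hLI : ∀ n ∈ Finset.Icc 1 N, ∀ t ∈ I, a n * t + b n ∈ I := fun n hn t ht =>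
    Icc_subset_Icc (hxI (n - 1) (by grind)).1 (hxI n (by grind)).2
      (himage n hn ▸ mem_image_of_mem _ ht)
  set G := fun t => yhat0 + ∫ s in x 0..t, g s
  have hG : ∀ t ∈ I, HasDerivWithinAt G (g t) I t := fun t ht =>
    (hasDerivWithinAt_integral_of_continuousOn hg ht).const_add yhat0
  have hGfe : ∀ n ∈ Finset.Icc 1 N, ∀ t ∈ I, G (a n * t + b n) = a n * γ n * G t +
      (yhat (n - 1) - a n * γ n * yhat0 + a n * ∫ s in x 0..t, q n s) := fun n hn t ht => by
    have := integral_affine_of_functional_eq (ha n hn).1.ne' hg (hq n hn) (hfe n hn)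
      (hLI n hn _ (hxI 0 (Nat.zero_le N))) ht (hLI n hn t ht)
    rw [hyhat (n - 1) (by grind), ← hL0 n hn]
    linear_combination this
  have hzero : EqOn (fun t => ghat t - G t) 0 I := by
    refine eqOn_zero_of_forall_exists_norm_le_mul isCompact_Icc
      (hghatc.sub fun t ht => (hG t ht).continuousWithinAt) fun s hs => ?_
    obtain ⟨n, hn, hsn⟩ := exists_mem_Icc_pred_of_mem_Icc hN hs
    obtain ⟨t, ht, rfl⟩ := (himage n hn).symm ▸ hsn
    refine ⟨t, ht, |a n * γ n|, ?_, le_of_eq ?_⟩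
    · rw [abs_mul, abs_of_pos (ha n hn).1]
      exact mul_lt_one_of_nonneg_of_lt_one_left (ha n hn).1.le (ha n hn).2 (hγ n hn).le
    · rw [Real.norm_eq_abs, Real.norm_eq_abs, ← abs_mul]
      congr 1
      simp only [hghatfe n hn t ht, hGfe n hn t ht]
      ring
  have heq : ∀ t ∈ I, ghat t = G t := fun t ht => sub_eq_zero.1 (hzero ht)
  exact ⟨heq, fun t ht => (hG t ht).congr heq (heq t ht)⟩

/-- Proposition 4.1, converse direction, single-IFS case: if `ĝ`
is a continuous solution of the self-referential equation with parameters
`γ̂ n = a n γ n`, `q̂ n (x) = ŷ_{n-1} - a n γ n ŷ₀ + a n ∫_{x₀}^x q n` and the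
prescribed endpoint values, then `ĝ(x) = ŷ₀ + ∫_{x₀}^x g`; in particular `ĝ` is
differentiable with `ĝ' = g` on `I`. -/
theorem stmt_15 (N : ℕ) (hN : 1 ≤ N) (x : ℕ → ℝ)
    (hx : ∀ i, i < N → x i < x (i + 1))
    (a b γ : ℕ → ℝ)
    (ha : ∀ n ∈ Finset.Icc 1 N, 0 < a n ∧ a n < 1)
    (hγ : ∀ n ∈ Finset.Icc 1 N, |γ n| < 1)
    (L : ℕ → ℝ → ℝ) (hL : ∀ n t, L n t = a n * t + b n)
    (hL0 : ∀ n ∈ Finset.Icc 1 N, L n (x 0) = x (n - 1))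
    (hLN : ∀ n ∈ Finset.Icc 1 N, L n (x N) = x n)
    (q : ℕ → ℝ → ℝ)
    (hq : ∀ n ∈ Finset.Icc 1 N, ContinuousOn (q n) (Icc (x 0) (x N)))
    (g : ℝ → ℝ) (hg : ContinuousOn g (Icc (x 0) (x N)))
    (hfe : ∀ n ∈ Finset.Icc 1 N, ∀ t ∈ Icc (x 0) (x N),
      g (L n t) = γ n * g t + q n t)
    (yhat0 : ℝ) (yhat : ℕ → ℝ)
    (hyhat : ∀ j ≤ N, yhat j = yhat0 + ∫ s in (x 0)..(x j), g s)
    (ghat : ℝ → ℝ) (hghatc : ContinuousOn ghat (Icc (x 0) (x N)))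
    (hghat0 : ghat (x 0) = yhat0) (hghatN : ghat (x N) = yhat N)
    (hghatfe : ∀ n ∈ Finset.Icc 1 N, ∀ t ∈ Icc (x 0) (x N),
      ghat (L n t) = (a n * γ n) * ghat t +
        (yhat (n - 1) - a n * γ n * yhat0 + a n * ∫ s in (x 0)..t, q n s)) :
    (∀ t ∈ Icc (x 0) (x N), ghat t = yhat0 + ∫ s in (x 0)..t, g s) ∧
    (∀ t ∈ Icc (x 0) (x N), HasDerivWithinAt ghat (g t) (Icc (x 0) (x N)) t) :=
  stmt_15_general N hN x hx a b γ ha hγ L hL hL0 hLN q hq g hg hfe yhat0 yhat hyhat ghat hghatc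
    hghatfe
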